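/- Let t ≥ 2 be an integer, let m be an even integer with m ≥ 4(t+3)+2, let n be an integer with (t−1)(m−1) ≤ n−1 < t(m−1), suppose p = ⌊(n−1)/t⌋ = m−2, and set r_3 = tp + t + 2 − n. If 2·r_3 ≤ t+3, then R(C_m, B_n^{(3)}) ≥ n + 3p + 2; that is, there is a graph on n + 3p + 1 vertices containing no cycle of length m whose complement contains no B_n^{(3)}. -/

import Mathlib

/-- `G` contains a cycle of length `m`. -/
def HasCycleLen {V : Type*} (G : SimpleGraph V) (m : ℕ) : Prop :=
  ∃ (v : V) (c : G.Walk v v), c.IsCycle ∧ c.length = m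

/-- `G` contains the book `B_n^{(k)}`: a clique on `k` vertices together with
`n` further vertices each adjacent to all of them. -/
def HasBook {V : Type*} (G : SimpleGraph V) (k n : ℕ) : Prop :=
  ∃ S T : Finset V, S.card = k ∧ T.card = n ∧ Disjoint S T ∧
    (∀ u ∈ S, ∀ v ∈ S, u ≠ v → G.Adj u v) ∧
    (∀ u ∈ S, ∀ v ∈ T, G.Adj u v)

/-- Every simple graph on `N` vertices contains `C_m` or its complement contains
`B_n^{(k)}`. The Ramsey number `R(C_m, B_n^{(k)})` is the least such `N`. -/
def RamseyProp (m k n N : ℕ) : Prop :=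
  ∀ G : SimpleGraph (Fin N), HasCycleLen G m ∨ HasBook Gᶜ k n

/-!
The lower bound is witnessed by a disjoint union of windmills with `t + 3` blades in all, each
blade a `K_{p+1}`: `r₃ = tp + t + 2 - n` windmills with two blades (two `K_{p+1}` sharing a
vertex) and `t + 3 - 2r₃` single blades, `n + 3p + 1` vertices. A cycle cannot pass twice
through the hub of a windmill, so it stays inside one blade and has length at most
`p + 1 < m`. Three pairwise nonadjacent vertices lie in three different blades, at most two of
which share a hub, so with their neighbours they cover at least `3p + 2` vertices and leave at
most `n - 1` common non-neighbours.
-/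

open SimpleGraph Finset

namespace SimpleGraph

variable {V : Type*} {G : SimpleGraph V}

lemma Walk.exists_mem_support_of_separates {L S : Set V}
    (hLS : ∀ x y, G.Adj x y → x ∈ L → y ∉ L → x ∈ S) {u v : V} (w : G.Walk u v)
    (hu : u ∈ L) (hv : v ∉ L) : ∃ s ∈ S, s ∈ L ∧ s ∈ w.support := by
  obtain ⟨d, hd, hdL, hdL'⟩ := w.exists_boundary_dart L hu hv
  exact ⟨d.fst, hLS _ _ d.adj hdL hdL', hdL, w.dart_fst_mem_support_of_mem_darts hd⟩

/-- A cycle through a vertex `u ∈ L` stays inside `L` when at most one vertex other than `u`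
joins `L` to the rest of the graph: otherwise both arcs of the cycle between `u` and a vertex
outside `L` would pass through that vertex. -/
lemma Walk.IsCycle.support_subset_of_separates {v : V} {c : G.Walk v v} (hc : c.IsCycle)
    {L S : Set V} (hS : S.Subsingleton) (hLS : ∀ x y, G.Adj x y → x ∈ L → y ∉ L → x ∈ S)
    {u : V} (hu : u ∈ c.support) (huL : u ∈ L) (huS : u ∉ S) : ∀ w ∈ c.support, w ∈ L := by
  classical
  intro w hw
  by_contra hwL
  set c' := c.rotate u hu
  have hw' : w ∈ c'.support := (c.mem_support_rotate_iff u hu).2 hw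
  obtain ⟨s, hsS, hsL, hs_take⟩ :=
    (c'.takeUntil w hw').exists_mem_support_of_separates hLS huL hwL
  obtain ⟨s', hs'S, -, hs_drop⟩ :=
    (c'.dropUntil w hw').reverse.exists_mem_support_of_separates hLS huL hwL
  obtain rfl : s' = s := hS hs'S hsS
  replace hs_drop : s' ∈ (c'.dropUntil w hw').support.tail := by
    rw [support_reverse, List.mem_reverse, ← cons_tail_support, List.mem_cons] at hs_drop
    exact hs_drop.resolve_left (by rintro rfl; exact hwL hsL)
  have hcount : c'.support.count s' = 1 := (hc.rotate hu).count_support_of_mem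
    (c'.support_takeUntil_subset_support hw' hs_take) (by rintro rfl; exact huS hsS)
  rw [← c'.take_spec hw', support_append, List.count_append] at hcount
  have := List.count_pos_iff.2 hs_take
  have := List.count_pos_iff.2 hs_drop
  omega

lemma Walk.IsCycle.length_le_card_of_support_subset {v : V} {c : G.Walk v v} (hc : c.IsCycle)
    {L : Finset V} (hL : ∀ w ∈ c.support, w ∈ L) : c.length ≤ L.card := by
  classical
  calc c.length = c.support.tail.toFinset.card := by
        rw [List.toFinset_card_of_nodup hc.support_nodup, List.length_tail, length_support]; rfl
    _ ≤ L.card := card_le_card fun x hx => hL x (List.mem_of_mem_tail (List.mem_toFinset.1 hx))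

end SimpleGraph

section Transfer

variable {V W : Type*} {G : SimpleGraph V} {H : SimpleGraph W}

lemma HasCycleLen.map (f : G ↪g H) {m : ℕ} (h : HasCycleLen G m) : HasCycleLen H m := by
  obtain ⟨v, c, hc, rfl⟩ := h
  exact ⟨f v, c.map f.toHom, hc.map f.injective, c.length_map _⟩

lemma HasBook.map (f : G ↪g H) {k n : ℕ} (h : HasBook G k n) : HasBook H k n := by
  obtain ⟨S, T, hS, hT, hST, hSS, hST'⟩ := h
  refine ⟨S.map f.toEmbedding, T.map f.toEmbedding, by simpa, by simpa,
    (disjoint_map _).2 hST, ?_, ?_⟩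
  · simp only [mem_map]
    rintro _ ⟨u, hu, rfl⟩ _ ⟨v, hv, rfl⟩ huv
    exact f.map_adj_iff.2 (hSS u hu v hv (ne_of_apply_ne _ huv))
  · simp only [mem_map]
    rintro _ ⟨u, hu, rfl⟩ _ ⟨v, hv, rfl⟩
    exact f.map_adj_iff.2 (hST' u hu v hv)

lemma card_lt_of_ramseyProp [Fintype V] {m k n N : ℕ} (hC : ¬HasCycleLen G m)
    (hB : ¬HasBook Gᶜ k n) (hN : RamseyProp m k n N) : Fintype.card V < N := by
  by_contra! hle
  let e : Fin N ↪ V := (Fin.castLEEmb hle).trans (Fintype.equivFin V).symm.toEmbedding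
  rcases hN (G.comap e) with h | h
  · exact hC (h.map (Embedding.comap e G))
  · exact hB (h.map (Embedding.complEquiv (Embedding.comap e G)))

end Transfer

lemma Finset.two_le_card_image_of_card_eq_three {α β : Type*} [DecidableEq β] {f : α → β}
    (hf : ∀ a₁ a₂ a₃, f a₁ = f a₂ → f a₂ = f a₃ → a₁ = a₂ ∨ a₁ = a₃ ∨ a₂ = a₃)
    {s : Finset α} (hs : s.card = 3) : 2 ≤ (s.image f).card := by
  classical
  by_contra! h
  obtain ⟨a₁, a₂, a₃, h₁₂, h₁₃, h₂₃, rfl⟩ := card_eq_three.1 hs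
  have hf' := card_le_one.1 (Nat.le_of_lt_succ h)
  rcases hf a₁ a₂ a₃ (hf' _ (by simp) _ (by simp)) (hf' _ (by simp) _ (by simp)) with h | h | h
    <;> contradiction

section Windmill

variable {ι β : Type*} (g : β → ι) (p : ℕ)

/-- The disjoint union of windmills: vertex `.inl c` is the hub of a windmill whose blades are
the `b ∈ g ⁻¹' {c}`, and blade `b` is a copy of `K_{p+1}` on the hub and the `p` vertices
`.inr (b, x)`. -/
def windmillGraph : SimpleGraph (ι ⊕ β × Fin p) where
  Adj u v := match u, v with
    | .inl c, .inr (b, _) => g b = c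
    | .inr (b, _), .inl c => g b = c
    | .inr (b, x), .inr (b', y) => b = b' ∧ x ≠ y
    | .inl _, .inl _ => False
  symm := ⟨by rintro (c | ⟨b, x⟩) (c' | ⟨b', y⟩) h <;> simp_all [eq_comm]⟩
  loopless := ⟨by rintro (c | ⟨b, x⟩) h <;> simp_all⟩

namespace windmillGraph

def blade (b : β) : Finset (ι ⊕ β × Fin p) :=
  cons (.inl (g b)) (univ.map ((Function.Embedding.sectR b _).trans .inr)) (by simp)

variable {g p}

@[simp] lemma inl_mem_blade {b : β} {c : ι} :
    (.inl c : ι ⊕ β × Fin p) ∈ blade g p b ↔ g b = c := by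
  simp [blade, eq_comm]

@[simp] lemma inr_mem_blade {b b' : β} {x : Fin p} :
    (.inr (b', x) : ι ⊕ β × Fin p) ∈ blade g p b ↔ b' = b := by
  simp [blade, eq_comm]

lemma card_blade (b : β) : (blade g p b).card = p + 1 := by
  simp [blade]

lemma isClique_blade (b : β) :
    (windmillGraph g p).IsClique (blade g p b : Set (ι ⊕ β × Fin p)) := by
  rintro (c | ⟨b₁, x⟩) h₁ (c' | ⟨b₂, y⟩) h₂ hne <;> simp_all [windmillGraph]

lemma eq_inl_of_adj_of_mem_blade {b : β} (x y : ι ⊕ β × Fin p)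
    (hxy : (windmillGraph g p).Adj x y) (hx : x ∈ blade g p b) (hy : y ∉ blade g p b) :
    x = .inl (g b) := by
  rcases x with c | ⟨b₁, x⟩ <;> rcases y with c' | ⟨b₂, y⟩ <;> simp_all [windmillGraph]

lemma exists_mem_blade (hg : Function.Surjective g) (v : ι ⊕ β × Fin p) :
    ∃ b, v ∈ blade g p b := by
  rcases v with c | ⟨b, x⟩
  · exact ⟨Function.surjInv hg c, by simp [Function.surjInv_eq]⟩
  · exact ⟨b, by simp⟩

lemma length_le_of_isCycle {v : ι ⊕ β × Fin p} {c : (windmillGraph g p).Walk v v}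
    (hc : c.IsCycle) : c.length ≤ p + 1 := by
  obtain ⟨b, x, hbx⟩ : ∃ b x, (.inr (b, x) : ι ⊕ β × Fin p) ∈ c.support := by
    rcases v with c₀ | ⟨b, x⟩
    · -- hubs are pairwise nonadjacent, so the vertex after a hub is a blade vertex
      have hadj := c.adj_snd hc.not_nil
      rcases hsnd : c.snd with c₁ | ⟨b, x⟩
      · rw [hsnd] at hadj
        exact hadj.elim
      · exact ⟨b, x, hsnd ▸ c.getVert_mem_support 1⟩
    · exact ⟨b, x, c.start_mem_support⟩
  have hsub := hc.support_subset_of_separates (L := blade g p b) Set.subsingleton_singleton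
    eq_inl_of_adj_of_mem_blade hbx (by simp) (by simp)
  exact (hc.length_le_card_of_support_subset hsub).trans (card_blade b).le

lemma not_hasCycleLen {m : ℕ} (hm : p + 1 < m) :
    ¬HasCycleLen (windmillGraph g p) m := by
  rintro ⟨v, c, hc, rfl⟩
  exact hm.not_ge (length_le_of_isCycle hc)

lemma card_biUnion_blade [DecidableEq ι] [DecidableEq β] (T : Finset β) :
    (T.biUnion (blade g p)).card = (T.image g).card + T.card * p := by
  have hT : T.biUnion (blade g p) = (T.image g).map .inl ∪ (T ×ˢ univ).map .inr := by
    ext (c | ⟨b, x⟩) <;> simp [eq_comm]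
  rw [hT, card_union_of_disjoint (by simp [Finset.disjoint_left]), card_map, card_map,
    card_product, card_univ, Fintype.card_fin]

lemma not_hasBook_compl [Fintype ι] [Fintype β] (hsurj : Function.Surjective g)
    (hg : ∀ b₁ b₂ b₃, g b₁ = g b₂ → g b₂ = g b₃ → b₁ = b₂ ∨ b₁ = b₃ ∨ b₂ = b₃) {n : ℕ}
    (hcard : Fintype.card (ι ⊕ β × Fin p) ≤ n + 3 * p + 1) :
    ¬HasBook (windmillGraph g p)ᶜ 3 n := by
  classical
  rintro ⟨S, T, hS, hT, hST, hSS, hST'⟩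
  choose φ hφ using exists_mem_blade (p := p) hsurj
  have hφ_inj : Set.InjOn φ S := fun u hu v hv huv => by
    by_contra hne
    exact (hSS u hu v hv hne).2 (isClique_blade (φ u) (hφ u) (huv ▸ hφ v) hne)
  set B := (S.image φ).biUnion (blade g p)
  have hB : 3 * p + 2 ≤ B.card := by
    have := two_le_card_image_of_card_eq_three hg ((card_image_of_injOn hφ_inj).trans hS)
    rw [card_biUnion_blade, card_image_of_injOn hφ_inj, hS]
    omega
  have hBT : Disjoint B T := by
    simp only [B, Finset.disjoint_left, mem_biUnion, mem_image]
    rintro v ⟨_, ⟨s, hs, rfl⟩, hv⟩ hvT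
    obtain rfl | hne := eq_or_ne s v
    · exact Finset.disjoint_left.1 hST hs hvT
    · exact (hST' s hs v hvT).2 (isClique_blade _ (hφ s) hv hne)
  have := card_le_univ (B ∪ T)
  rw [card_union_of_disjoint hBT, hT] at this
  omega

end windmillGraph

end Windmill

theorem stmt8_general (t m n p : ℕ) (ht : 2 ≤ t)
    (hm : 4 * (t + 3) + 2 ≤ m)
    (hp : p = (n - 1) / t) (hpm : p = m - 2)
    (hcase : 2 * (t * p + t + 2 - n) ≤ t + 3) :
    (∀ N : ℕ, RamseyProp m 3 n N → n + 3 * p + 2 ≤ N) ∧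
    ∃ G : SimpleGraph (Fin (n + 3 * p + 1)),
      ¬ HasCycleLen G m ∧ ¬ HasBook Gᶜ 3 n := by
  set r := t * p + t + 2 - n
  have hr : n + r = t * p + t + 2 := by
    have := Nat.div_add_mod (n - 1) t
    have := Nat.mod_lt (n - 1) (by omega : 0 < t)
    rw [← hp] at *
    omega
  obtain ⟨k, hk⟩ : ∃ k, 2 * r + k = t + 3 := ⟨t + 3 - 2 * r, by omega⟩
  let g : Fin r × Fin 2 ⊕ Fin k → Fin r ⊕ Fin k := Sum.map Prod.fst id
  have hg : ∀ b₁ b₂ b₃, g b₁ = g b₂ → g b₂ = g b₃ → b₁ = b₂ ∨ b₁ = b₃ ∨ b₂ = b₃ := by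
    rintro (⟨i, a⟩ | j) (⟨i', a'⟩ | j') (⟨i'', a''⟩ | j'') h h' <;> simp_all [g]
    omega
  have hcard :
      Fintype.card ((Fin r ⊕ Fin k) ⊕ (Fin r × Fin 2 ⊕ Fin k) × Fin p) = n + 3 * p + 1 := by
    simp only [Fintype.card_sum, Fintype.card_prod, Fintype.card_fin]
    rw [show r * 2 + k = t + 3 by omega, add_mul]
    omega
  have hC : ¬HasCycleLen (windmillGraph g p) m := windmillGraph.not_hasCycleLen (by omega)
  have hB : ¬HasBook (windmillGraph g p)ᶜ 3 n :=
    windmillGraph.not_hasBook_compl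
      (Sum.map_surjective.2 ⟨Prod.fst_surjective, Function.surjective_id⟩) hg hcard.le
  let e := (windmillGraph g p).overFinIso hcard
  refine ⟨fun N hN => hcard.symm.trans_lt (card_lt_of_ramseyProp hC hB hN),
    (windmillGraph g p).overFin hcard, fun h => ?_, fun h => ?_⟩
  · exact hC (h.map e.symm.toEmbedding)
  · exact hB (h.map (Embedding.complEquiv e.symm.toEmbedding))

theorem stmt8 (t m n p : ℕ) (ht : 2 ≤ t) (hmEven : Even m)
    (hm : 4 * (t + 3) + 2 ≤ m)
    (hn1 : (t - 1) * (m - 1) ≤ n - 1) (hn2 : n - 1 < t * (m - 1))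
    (hp : p = (n - 1) / t) (hpm : p = m - 2)
    (hcase : 2 * (t * p + t + 2 - n) ≤ t + 3) :
    (∀ N : ℕ, RamseyProp m 3 n N → n + 3 * p + 2 ≤ N) ∧
    ∃ G : SimpleGraph (Fin (n + 3 * p + 1)),
      ¬ HasCycleLen G m ∧ ¬ HasBook Gᶜ 3 n :=
  stmt8_general t m n p ht hm hp hpm hcase
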